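/- Let D be a degree sequence with maximum d, Σ its reverse cumulative histogram, and Φ the associated Erdős–Gallai slacks. If one entry of D of value d − k + 1 is decreased by one (σ_k ↦ σ_k − 1, other σ_j fixed, d fixed), then φ'_k = φ_k + (d − k + 1) − 2(σ_k − 1) + min(σ_k − 1, d − k) − max(0, σ_{d−σ_k+1} − σ_k), interpreting σ_i = 0 for i < 1 and σ_i = σ_d for i > d. -/

import Mathlib

/-!
Decreasing an entry of value `d - k + 1` lowers `σ_k` by one and leaves every other `σ_j`,
`j ≤ d`, unchanged. In `φ_k` the quadratic term drops by `2 (σ_k - 1)`, the lower sum loses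
`d - k + 1` from its top increment, and the upper sum gains `min (σ_k - 1) (d - k)` from the
increment at `i = k + 1`. Lowering the cap in `min σ_k (d - i + 1)` by one removes exactly the
increments with `d - i + 1 ≥ σ_k`; they telescope to `σ_{d - σ_k + 1} - σ_k`, or to nothing when
`d - σ_k + 1 < k`, which by monotonicity of `σ` is the positive part.
-/

open Finset

theorem sum_Icc_sub_pred {M : Type*} [AddCommGroup M] (g : ℕ → M) {a b : ℕ} (hab : a ≤ b) :
    ∑ i ∈ Icc (a + 1) b, (g i - g (i - 1)) = g b - g a := by
  rw [← Ico_add_one_right_eq_Icc, ← sum_Ico_add', ← sum_Ico_sub g hab]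
  simp only [add_tsub_cancel_right]

theorem Monotone.sum_Icc_sub_pred_eq_max {σ : ℕ → ℕ} (hσ : Monotone σ) (a b : ℕ) :
    ∑ i ∈ Icc (a + 1) b, ((σ i : ℤ) - σ (i - 1)) = max 0 ((σ b : ℤ) - σ a) := by
  rcases le_or_gt a b with hab | hba
  · rw [sum_Icc_sub_pred (fun i => (σ i : ℤ)) hab]
    have := hσ hab
    omega
  · rw [Icc_eq_empty (by omega), sum_empty]
    have := hσ hba.le
    omega

theorem sum_Icc_one_sub_pred_mul_of_eq_of_lt {R : Type*} [CommRing R] {f g : ℕ → R} (w : ℕ → R)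
    {k : ℕ} (hk : 1 ≤ k) (hfg : ∀ i < k, g i = f i) :
    ∑ i ∈ Icc 1 k, (g i - g (i - 1)) * w i =
      ∑ i ∈ Icc 1 k, (f i - f (i - 1)) * w i + (g k - f k) * w k := by
  obtain ⟨m, rfl⟩ : ∃ m, k = m + 1 := ⟨k - 1, by omega⟩
  have hsame : ∑ i ∈ Icc 1 m, (g i - g (i - 1)) * w i = ∑ i ∈ Icc 1 m, (f i - f (i - 1)) * w i :=
    sum_congr rfl fun i hi => by
      rw [mem_Icc] at hi
      rw [hfg i (by omega), hfg (i - 1) (by omega)]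
  rw [sum_Icc_succ_top hk, sum_Icc_succ_top hk, hsame, add_tsub_cancel_right, hfg m (by omega)]
  ring

theorem sum_Icc_sub_pred_mul_of_eq_of_lt {R : Type*} [CommRing R] {f g : ℕ → R} (w : ℕ → R)
    {a b : ℕ} (hab : a < b) (hfg : ∀ i, a < i → i ≤ b → g i = f i) :
    ∑ i ∈ Icc (a + 1) b, (g i - g (i - 1)) * w i =
      ∑ i ∈ Icc (a + 1) b, (f i - f (i - 1)) * w i + (f a - g a) * w (a + 1) := by
  have hsame : ∑ i ∈ Icc (a + 1 + 1) b, (g i - g (i - 1)) * w i =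
      ∑ i ∈ Icc (a + 1 + 1) b, (f i - f (i - 1)) * w i :=
    sum_congr rfl fun i hi => by
      rw [mem_Icc] at hi
      rw [hfg i (by omega) hi.2, hfg (i - 1) (by omega) (by omega)]
  rw [← add_sum_Ioc_eq_sum_Icc hab, ← add_sum_Ioc_eq_sum_Icc hab, ← Icc_add_one_left_eq_Ioc,
    hsame, add_tsub_cancel_right, hfg (a + 1) (by omega) hab]
  ring

theorem sum_Icc_sub_pred_mul_min_sub_one (f : ℕ → ℤ) {k s : ℕ} (hk : 1 ≤ k) (hs : 1 ≤ s) (d : ℕ) :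
    ∑ i ∈ Icc (k + 1) d, (f i - f (i - 1)) * min ((s : ℤ) - 1) ((d : ℤ) - i + 1) =
      ∑ i ∈ Icc (k + 1) d, (f i - f (i - 1)) * min (s : ℤ) ((d : ℤ) - i + 1) -
        ∑ i ∈ Icc (k + 1) (d - s + 1), (f i - f (i - 1)) := by
  have hterm : ∀ i ∈ Icc (k + 1) d,
      (f i - f (i - 1)) * min ((s : ℤ) - 1) ((d : ℤ) - i + 1) =
        (f i - f (i - 1)) * min (s : ℤ) ((d : ℤ) - i + 1) -
          if i ≤ d - s + 1 then f i - f (i - 1) else 0 := by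
    intro i hi
    rw [mem_Icc] at hi
    split_ifs with h
    · rw [min_eq_left (by omega), min_eq_left (by omega)]; ring
    · rw [min_eq_right (by omega), min_eq_right (by omega)]; ring
  rw [sum_congr rfl hterm, sum_sub_distrib, ← sum_filter]
  congr 2
  ext i
  simp only [mem_filter, mem_Icc]
  omega

theorem card_filter_le_update_of_iff {ι : Type*} [DecidableEq ι] (s : Finset ι) (D : ι → ℕ)
    {i₀ : ι} {v t : ℕ} (h : t ≤ v ↔ t ≤ D i₀) :
    #(s.filter fun i => t ≤ Function.update D i₀ v i) = #(s.filter fun i => t ≤ D i) := by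
  congr 1
  refine filter_congr fun i _ => ?_
  rcases eq_or_ne i i₀ with rfl | hne
  · rwa [Function.update_self]
  · rw [Function.update_of_ne hne]

theorem card_filter_le_update_add_one {ι : Type*} [DecidableEq ι] {s : Finset ι} (D : ι → ℕ)
    {i₀ : ι} {v t : ℕ} (hi₀ : i₀ ∈ s) (hv : v < t) (hD : t ≤ D i₀) :
    #(s.filter fun i => t ≤ Function.update D i₀ v i) + 1 = #(s.filter fun i => t ≤ D i) := by
  have herase : (s.filter fun i => t ≤ Function.update D i₀ v i) =
      (s.filter fun i => t ≤ D i).erase i₀ := by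
    ext i
    rcases eq_or_ne i i₀ with rfl | hne
    · simp [hv]
    · simp [hne]
  rw [herase, card_erase_add_one (mem_filter.2 ⟨hi₀, hD⟩)]

theorem monotone_card_filter_sub_add_one_le {ι : Type*} (s : Finset ι) (D : ι → ℕ) (d : ℕ) :
    Monotone fun j => #(s.filter fun i => d - j + 1 ≤ D i) := fun _ _ hj =>
  card_le_card <| monotone_filter_right s fun _ _ h => le_trans (by omega) h

def erdosGallaiSlack (d : ℕ) (σ : ℕ → ℕ) (j : ℕ) : ℤ :=
  (σ j : ℤ) * ((σ j : ℤ) - 1) +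
    (∑ i ∈ Icc (j + 1) d, ((σ i : ℤ) - (σ (i - 1) : ℤ)) * min (σ j : ℤ) ((d : ℤ) - i + 1)) -
    ∑ i ∈ Icc 1 j, ((σ i : ℤ) - (σ (i - 1) : ℤ)) * ((d : ℤ) - i + 1)

theorem erdosGallaiSlack_of_pred_at {d k : ℕ} {σ σ' : ℕ → ℕ} (hσ : Monotone σ) (hk : 1 ≤ k)
    (hkd : k ≤ d) (hσ'k : σ' k + 1 = σ k) (hσ' : ∀ j ≤ d, j ≠ k → σ' j = σ j) :
    erdosGallaiSlack d σ' k = erdosGallaiSlack d σ k + ((d : ℤ) - k + 1) - 2 * ((σ k : ℤ) - 1) +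
      min ((σ k : ℤ) - 1) ((d : ℤ) - k) - max 0 ((σ (d - σ k + 1) : ℤ) - σ k) := by
  have hσ'k' : (σ' k : ℤ) = σ k - 1 := by omega
  have hlower : ∑ i ∈ Icc 1 k, ((σ' i : ℤ) - σ' (i - 1)) * ((d : ℤ) - i + 1) =
      ∑ i ∈ Icc 1 k, ((σ i : ℤ) - σ (i - 1)) * ((d : ℤ) - i + 1) - ((d : ℤ) - k + 1) := by
    rw [sum_Icc_one_sub_pred_mul_of_eq_of_lt (fun i => (d : ℤ) - i + 1) hk
      (fun i hi => by rw [hσ' i (by omega) hi.ne]), hσ'k']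
    ring
  have hupper :
      ∑ i ∈ Icc (k + 1) d, ((σ' i : ℤ) - σ' (i - 1)) * min ((σ k : ℤ) - 1) ((d : ℤ) - i + 1) =
      ∑ i ∈ Icc (k + 1) d, ((σ i : ℤ) - σ (i - 1)) * min ((σ k : ℤ) - 1) ((d : ℤ) - i + 1) +
        min ((σ k : ℤ) - 1) ((d : ℤ) - k) := by
    rcases hkd.lt_or_eq with hlt | rfl
    · rw [sum_Icc_sub_pred_mul_of_eq_of_lt (fun i => min ((σ k : ℤ) - 1) ((d : ℤ) - i + 1)) hlt
        (fun i hi hid => by rw [hσ' i hid (by omega)]), hσ'k']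
      push_cast
      ring_nf
    · simp only [Icc_eq_empty (by omega : ¬ k + 1 ≤ k), sum_empty]
      omega
  rw [erdosGallaiSlack, erdosGallaiSlack, hσ'k', hlower, hupper,
    sum_Icc_sub_pred_mul_min_sub_one _ hk (by omega), hσ.sum_Icc_sub_pred_eq_max]
  ring

theorem phi_drop_at_general (n d k i₀ : ℕ) (hi₀ : i₀ < n) (hk : 1 ≤ k) (hkd : k ≤ d)
    (D : ℕ → ℕ)
    (hval : D i₀ = d - k + 1)
    (D' : ℕ → ℕ) (hD' : D' = Function.update D i₀ (d - k))
    (σ σ' : ℕ → ℕ)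
    (hσ : ∀ j, σ j = ((Finset.range n).filter (fun i => d - j + 1 ≤ D i)).card)
    (hσ' : ∀ j, σ' j = ((Finset.range n).filter (fun i => d - j + 1 ≤ D' i)).card)
    (φ φ' : ℕ → ℤ)
    (hφ : ∀ j, φ j =
      (σ j : ℤ) * ((σ j : ℤ) - 1) +
        (∑ i ∈ Finset.Icc (j + 1) d,
          ((σ i : ℤ) - (σ (i - 1) : ℤ)) * min ((σ j : ℤ)) ((d : ℤ) - (i : ℤ) + 1)) -
        ∑ i ∈ Finset.Icc 1 j, ((σ i : ℤ) - (σ (i - 1) : ℤ)) * ((d : ℤ) - (i : ℤ) + 1))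
    (hφ' : ∀ j, φ' j =
      (σ' j : ℤ) * ((σ' j : ℤ) - 1) +
        (∑ i ∈ Finset.Icc (j + 1) d,
          ((σ' i : ℤ) - (σ' (i - 1) : ℤ)) * min ((σ' j : ℤ)) ((d : ℤ) - (i : ℤ) + 1)) -
        ∑ i ∈ Finset.Icc 1 j, ((σ' i : ℤ) - (σ' (i - 1) : ℤ)) * ((d : ℤ) - (i : ℤ) + 1)) :
    φ' k = φ k + ((d : ℤ) - (k : ℤ) + 1) - 2 * ((σ k : ℤ) - 1) +
      min ((σ k : ℤ) - 1) ((d : ℤ) - (k : ℤ)) -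
      max 0 ((σ (d - σ k + 1) : ℤ) - (σ k : ℤ)) := by
  subst hD'
  have hmono : Monotone σ := by
    simpa only [← hσ] using monotone_card_filter_sub_add_one_le (range n) D d
  have hσ'k : σ' k + 1 = σ k := by
    rw [hσ, hσ']
    exact card_filter_le_update_add_one D (mem_range.2 hi₀) (by omega) (by omega)
  have hσ'eq : ∀ j ≤ d, j ≠ k → σ' j = σ j := fun j hj hjk => by
    rw [hσ, hσ']
    exact card_filter_le_update_of_iff _ D (by omega)
  rw [hφ k, hφ' k]
  exact erdosGallaiSlack_of_pred_at hmono hk hkd hσ'k hσ'eq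

/-- Lemma 2(b): after decreasing one entry of value `d − k + 1` by one, the slack at
`j = k` changes by `(d−k+1) − 2(σ_k−1) + min(σ_k−1, d−k) − max(0, σ_{d−σ_k+1} − σ_k)`. -/
theorem phi_drop_at (n d k i₀ : ℕ) (hi₀ : i₀ < n) (hk : 1 ≤ k) (hkd : k ≤ d)
    (D : ℕ → ℕ)
    (hanti : ∀ i j, i ≤ j → j < n → D j ≤ D i)
    (hpos : ∀ i, i < n → 0 < D i)
    (hmaxle : ∀ i, i < n → D i ≤ d)
    (hmaxex : ∃ i, i < n ∧ D i = d)
    (hval : D i₀ = d - k + 1)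
    (D' : ℕ → ℕ) (hD' : D' = Function.update D i₀ (d - k))
    (σ σ' : ℕ → ℕ)
    (hσ : ∀ j, σ j = ((Finset.range n).filter (fun i => d - j + 1 ≤ D i)).card)
    (hσ' : ∀ j, σ' j = ((Finset.range n).filter (fun i => d - j + 1 ≤ D' i)).card)
    (φ φ' : ℕ → ℤ)
    (hφ : ∀ j, φ j =
      (σ j : ℤ) * ((σ j : ℤ) - 1) +
        (∑ i ∈ Finset.Icc (j + 1) d,
          ((σ i : ℤ) - (σ (i - 1) : ℤ)) * min ((σ j : ℤ)) ((d : ℤ) - (i : ℤ) + 1)) -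
        ∑ i ∈ Finset.Icc 1 j, ((σ i : ℤ) - (σ (i - 1) : ℤ)) * ((d : ℤ) - (i : ℤ) + 1))
    (hφ' : ∀ j, φ' j =
      (σ' j : ℤ) * ((σ' j : ℤ) - 1) +
        (∑ i ∈ Finset.Icc (j + 1) d,
          ((σ' i : ℤ) - (σ' (i - 1) : ℤ)) * min ((σ' j : ℤ)) ((d : ℤ) - (i : ℤ) + 1)) -
        ∑ i ∈ Finset.Icc 1 j, ((σ' i : ℤ) - (σ' (i - 1) : ℤ)) * ((d : ℤ) - (i : ℤ) + 1)) :
    φ' k = φ k + ((d : ℤ) - (k : ℤ) + 1) - 2 * ((σ k : ℤ) - 1) +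
      min ((σ k : ℤ) - 1) ((d : ℤ) - (k : ℤ)) -
      max 0 ((σ (d - σ k + 1) : ℤ) - (σ k : ℤ)) :=
  phi_drop_at_general n d k i₀ hi₀ hk hkd D hval D' hD' σ σ' hσ hσ' φ φ' hφ hφ'
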